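/- No multi-stack visibly pushdown automaton recognizes {aⁿbⁿcⁿ | n ≥ 1}, regardless of the choice of K-stack call-return alphabet partitioning {a,b,c} (with pairwise disjoint call, return and internal alphabets). -/

import Mathlib

/-- The *kind* of a letter in a `K`-stack call-return alphabet: a call of some
stack `s`, a return of some stack `s`, or an internal action. -/
inductive CRKind (K : ℕ) where
  | call (s : Fin K)
  | ret (s : Fin K)
  | int

/-- A `K`-stack call-return alphabet over the letters `A`: every letter is
(exclusively) a call of one stack, a return of one stack, or internal.  This
encodes the pairwise disjointness of the collection
`⟨{(Σ_c^s, Σ_r^s)}_{s∈[K]}, Σ_int⟩` together with `Σ` being their union. -/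
structure CRAlphabet (K : ℕ) (A : Type) where
  kind : A → CRKind K

namespace CRAlphabet

variable {K : ℕ} {A : Type}

def callSet (h : CRAlphabet K A) (s : Fin K) : Set A := {a | h.kind a = .call s}
def retSet (h : CRAlphabet K A) (s : Fin K) : Set A := {a | h.kind a = .ret s}
def intSet (h : CRAlphabet K A) : Set A := {a | h.kind a = .int}

end CRAlphabet

/-- `s`-well-formed strings: generated by the grammar
`A ::= aAb | AA | ε | c` with `a ∈ c`, `b ∈ r`, `c ∉ c ∪ r`. -/
inductive SWellFormed {A : Type} (c r : Set A) : List A → Prop where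
  | nil : SWellFormed c r []
  | single {x : A} : x ∉ c → x ∉ r → SWellFormed c r [x]
  | wrap {a b : A} {u : List A} : a ∈ c → b ∈ r → SWellFormed c r u →
      SWellFormed c r (a :: u ++ [b])
  | concat {u v : List A} : SWellFormed c r u → SWellFormed c r v →
      SWellFormed c r (u ++ v)

/-- The matching relation `μ^s` of the nested word determined by the string
`w` (positions `0`-based): `(i,j) ∈ μ^s` iff `i < j`, `λ(i) ∈ Σ_c^s`,
`λ(j) ∈ Σ_r^s` and `λ(i+1) … λ(j-1)` is `s`-well formed. -/
def Matched {K : ℕ} {A : Type} (h : CRAlphabet K A) (w : List A) (s : Fin K)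
    (i j : ℕ) : Prop :=
  i < j ∧ j < w.length ∧
  (∃ a, w[i]? = some a ∧ a ∈ h.callSet s) ∧
  (∃ b, w[j]? = some b ∧ b ∈ h.retSet s) ∧
  SWellFormed (h.callSet s) (h.retSet s) ((w.take j).drop (i + 1))

/-- The full matching relation `μ = ⋃_s μ^s`. -/
def MuAny {K : ℕ} {A : Type} (h : CRAlphabet K A) (w : List A) (i j : ℕ) : Prop :=
  ∃ s, Matched h w s i j

/-- A multi-stack visibly pushdown automaton over a `K`-stack call-return
alphabet, with states `Q` and stack alphabet `Γ` (the bottom symbol `⊥` is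
represented implicitly: a stack contents is a list over `Γ`, the empty list
standing for the stack containing only `⊥`; in pop transitions the stack
symbol `none` stands for `⊥`). -/
structure MVPA (K : ℕ) (A Q Γ : Type) where
  pushT : Q → A → Γ → Q → Prop
  popT : Q → A → Option Γ → Q → Prop
  intT : Q → A → Q → Prop
  qI : Set Q
  qF : Set Q

/-- One step of the MVPA `M` reading letter `a`, from configuration `c` to
configuration `c'` (a configuration is a state together with one stack
contents per stack). -/
def vStep {K : ℕ} {A Q Γ : Type} (h : CRAlphabet K A) (M : MVPA K A Q Γ)
    (a : A) (c c' : Q × (Fin K → List Γ)) : Prop :=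
  (∃ s, h.kind a = .call s ∧ ∃ g, M.pushT c.1 a g c'.1 ∧
     c'.2 s = g :: c.2 s ∧ ∀ t, t ≠ s → c'.2 t = c.2 t) ∨
  (∃ s, h.kind a = .ret s ∧ (∀ t, t ≠ s → c'.2 t = c.2 t) ∧
     ((∃ g, M.popT c.1 a (some g) c'.1 ∧ c.2 s = g :: c'.2 s) ∨
      (M.popT c.1 a none c'.1 ∧ c.2 s = [] ∧ c'.2 s = []))) ∨
  (h.kind a = .int ∧ M.intT c.1 a c'.1 ∧ c'.2 = c.2)

/-- The MVPA `M` accepts the string `w`: some run starting in an initial state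
with all stacks empty and ending in a final state. -/
def vAccepts {K : ℕ} {A Q Γ : Type} (h : CRAlphabet K A) (M : MVPA K A Q Γ)
    (w : List A) : Prop :=
  ∃ f : ℕ → Q × (Fin K → List Γ),
    (f 0).1 ∈ M.qI ∧ (∀ s, (f 0).2 s = []) ∧
    (∀ i a, w[i]? = some a → vStep h M a (f i) (f (i + 1))) ∧
    (f w.length).1 ∈ M.qF

/-- The language of the MVPA `M` (nonempty strings, identified with their
nested words). -/
def vLang {K : ℕ} {A Q Γ : Type} (h : CRAlphabet K A) (M : MVPA K A Q Γ) :
    Set (List A) :=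
  {w | w ≠ [] ∧ vAccepts h M w}

/-- The three-letter alphabet `{a, b, c}`. -/
inductive L3abc where
  | a | b | c
deriving DecidableEq

/-!
Take `n = |Q| + 1` and an accepting run on `aⁿbⁿcⁿ`. Inside a block of equal letters every
stack only grows or stays put: an internal letter, or a return on an empty stack, changes no
stack, and a call only pushes. A case analysis on the kinds of `a`, `b`, `c` finds a block in
which, moreover, whatever a stack holds at any time of the block stays at its bottom until the
end of the word. By pigeonhole two times `p < q` of that block share a state; cutting out
`w[p, q)` and replacing, in every later stack, the bottom content at time `q` by the one at
time `p` yields an accepting run on a word with fewer copies of a single letter.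
-/

theorem exists_lt_map_eq_of_add_card_le {Q : Type} [Fintype Q] (g : ℕ → Q) {lo hi : ℕ}
    (hcard : lo + Fintype.card Q ≤ hi) : ∃ p q, lo ≤ p ∧ p < q ∧ q ≤ hi ∧ g p = g q := by
  obtain ⟨x, hx, y, hy, hxy, he⟩ := Finset.exists_ne_map_eq_of_card_lt_of_maps_to
    (s := Finset.Icc lo hi) (t := Finset.univ) (f := g)
    (by simp only [Finset.card_univ, Nat.card_Icc]; omega)
    (fun _ _ => Finset.mem_coe.mpr (Finset.mem_univ _))
  rw [Finset.mem_Icc] at hx hy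
  rcases hxy.lt_or_gt with hlt | hlt
  · exact ⟨x, y, hx.1, hlt, hy.2, he⟩
  · exact ⟨y, x, hy.1, hlt, hx.2, he.symm⟩

section Runs

variable {K : ℕ} {A Q Γ : Type} {h : CRAlphabet K A} {M : MVPA K A Q Γ}

theorem vStep_stack_of_call {a : A} {s : Fin K} {c c' : Q × (Fin K → List Γ)}
    (hs : vStep h M a c c') (hk : h.kind a = .call s) : ∃ g, c'.2 s = g :: c.2 s := by
  rcases hs with ⟨t, hk', g, -, hg, -⟩ | ⟨t, hk', -⟩ | ⟨hk', -⟩ <;> rw [hk] at hk' <;> cases hk'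
  exact ⟨g, hg⟩

theorem vStep_stack_of_ret {a : A} {s : Fin K} {c c' : Q × (Fin K → List Γ)}
    (hs : vStep h M a c c') (hk : h.kind a = .ret s) : c'.2 s = (c.2 s).tail := by
  rcases hs with ⟨t, hk', -⟩ | ⟨t, hk', -, ⟨g, -, hg⟩ | ⟨-, hc, hc'⟩⟩ | ⟨hk', -⟩ <;>
    rw [hk] at hk' <;> cases hk'
  · rw [hg, List.tail_cons]
  · rw [hc, hc', List.tail_nil]

theorem vStep_stack_of_ne {a : A} {s : Fin K} {c c' : Q × (Fin K → List Γ)}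
    (hs : vStep h M a c c') (hc : h.kind a ≠ .call s) (hr : h.kind a ≠ .ret s) :
    c'.2 s = c.2 s := by
  rcases hs with ⟨t, hk, -, -, -, hne⟩ | ⟨t, hk, hne, -⟩ | ⟨-, -, he⟩
  · exact hne s fun hst => hc (hst ▸ hk)
  · exact hne s fun hst => hr (hst ▸ hk)
  · rw [he]

def IsRun (h : CRAlphabet K A) (M : MVPA K A Q Γ) (w : List A)
    (f : ℕ → Q × (Fin K → List Γ)) : Prop :=
  ∀ i a, w[i]? = some a → vStep h M a (f i) (f (i + 1))

variable {w : List A} {f : ℕ → Q × (Fin K → List Γ)} {s : Fin K} {lo hi : ℕ}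

theorem IsRun.induction_on_block (hf : IsRun h M w f) (hhi : hi ≤ w.length) {P : ℕ → Prop}
    (base : P lo)
    (step : ∀ m x, lo ≤ m → m < hi → w[m]? = some x →
      vStep h M x (f m) (f (m + 1)) → P m → P (m + 1)) :
    ∀ m, lo ≤ m → m ≤ hi → P m := by
  intro m hlo
  induction m, hlo using Nat.le_induction with
  | base => exact fun _ => base
  | succ m hlo ih =>
    intro hm
    have hx : w[m]? = some w[m] := List.getElem?_eq_getElem (by omega)
    exact step m _ hlo (by omega) hx (hf m _ hx) (ih (by omega))

theorem IsRun.stack_eq_of_untouched (hf : IsRun h M w f) (hhi : hi ≤ w.length)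
    (hnc : ∀ k x, lo ≤ k → k < hi → w[k]? = some x → h.kind x ≠ .call s)
    (hnr : ∀ k x, lo ≤ k → k < hi → w[k]? = some x → h.kind x ≠ .ret s) :
    ∀ m, lo ≤ m → m ≤ hi → (f m).2 s = (f lo).2 s :=
  hf.induction_on_block hhi rfl fun m x h1 h2 hx hs ih => by
    rw [vStep_stack_of_ne hs (hnc m x h1 h2 hx) (hnr m x h1 h2 hx), ih]

theorem IsRun.stack_eq_nil (hf : IsRun h M w f) (hhi : hi ≤ w.length)
    (hnc : ∀ k x, lo ≤ k → k < hi → w[k]? = some x → h.kind x ≠ .call s)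
    (hlo : (f lo).2 s = []) :
    ∀ m, lo ≤ m → m ≤ hi → (f m).2 s = [] :=
  hf.induction_on_block hhi hlo fun m x h1 h2 hx hs ih => by
    by_cases hr : h.kind x = .ret s
    · rw [vStep_stack_of_ret hs hr, ih, List.tail_nil]
    · rw [vStep_stack_of_ne hs (hnc m x h1 h2 hx) hr, ih]

theorem IsRun.stack_suffix (hf : IsRun h M w f) (hhi : hi ≤ w.length)
    (hnr : ∀ k x, lo ≤ k → k < hi → w[k]? = some x → h.kind x ≠ .ret s) {m : ℕ}
    (hm : lo ≤ m) : ∀ m', m ≤ m' → m' ≤ hi → (f m).2 s <:+ (f m').2 s :=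
  hf.induction_on_block hhi (List.suffix_refl _) fun k x h1 h2 hx hs ih => by
    by_cases hc : h.kind x = .call s
    · obtain ⟨g, hg⟩ := vStep_stack_of_call hs hc
      exact hg ▸ ih.trans (List.suffix_cons g _)
    · rwa [vStep_stack_of_ne hs hc (hnr k x (by omega) h2 hx)]

theorem IsRun.length_stack_of_call (hf : IsRun h M w f) (hhi : hi ≤ w.length)
    (hc : ∀ k x, lo ≤ k → k < hi → w[k]? = some x → h.kind x = .call s) :
    ∀ m, lo ≤ m → m ≤ hi → ((f m).2 s).length = ((f lo).2 s).length + (m - lo) :=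
  hf.induction_on_block hhi (by simp) fun m x h1 h2 hx hs ih => by
    obtain ⟨g, hg⟩ := vStep_stack_of_call hs (hc m x h1 h2 hx)
    rw [hg, List.length_cons, ih]
    omega

theorem IsRun.stack_eq_drop_of_ret (hf : IsRun h M w f) (hhi : hi ≤ w.length)
    (hr : ∀ k x, lo ≤ k → k < hi → w[k]? = some x → h.kind x = .ret s) :
    ∀ m, lo ≤ m → m ≤ hi → (f m).2 s = ((f lo).2 s).drop (m - lo) :=
  hf.induction_on_block hhi (by simp) fun m x h1 h2 hx hs ih => by
    rw [vStep_stack_of_ret hs (hr m x h1 h2 hx), ih, List.tail_drop]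
    congr 1
    omega

variable {len : ℕ}

def StackPersists (f : ℕ → Q × (Fin K → List Γ)) (s : Fin K) (lo hi len : ℕ) : Prop :=
  ∀ m m', lo ≤ m → m ≤ hi → m ≤ m' → m' ≤ len → (f m).2 s <:+ (f m').2 s

def BlockPumpable (f : ℕ → Q × (Fin K → List Γ)) (lo hi len : ℕ) : Prop :=
  ∀ s, (∀ m, lo ≤ m → m ≤ hi → (f m).2 s = (f lo).2 s) ∨ StackPersists f s lo hi len

theorem IsRun.stackPersists_of_no_ret (hf : IsRun h M w f) (hlen : len ≤ w.length)
    (hnr : ∀ k x, lo ≤ k → k < len → w[k]? = some x → h.kind x ≠ .ret s) :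
    StackPersists f s lo hi len :=
  fun _ m' hm _ hmm' hm' => hf.stack_suffix hlen hnr hm m' hmm' hm'

theorem IsRun.stackPersists_of_call_ret {mid : ℕ} (hf : IsRun h M w f) (hlen : len ≤ w.length)
    (hnr : ∀ k x, lo ≤ k → k < hi → w[k]? = some x → h.kind x ≠ .ret s)
    (hc : ∀ k x, hi ≤ k → k < mid → w[k]? = some x → h.kind x = .call s)
    (hr : ∀ k x, mid ≤ k → k < len → w[k]? = some x → h.kind x = .ret s)
    (hhi : hi ≤ mid) (hmid : mid ≤ len) (hpops : len - mid ≤ mid - hi) :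
    StackPersists f s lo hi len := by
  intro m m' hm hmhi hmm' hm'
  have hnr' : ∀ k x, lo ≤ k → k < mid → w[k]? = some x → h.kind x ≠ .ret s := by
    intro k x hk hkmid hx
    by_cases hkhi : k < hi
    · exact hnr k x hk hkhi hx
    · rw [hc k x (by omega) hkmid hx]
      simp
  have hsuf := fun m (hm : lo ≤ m) => hf.stack_suffix (by omega) hnr' hm
  by_cases hm'mid : m' ≤ mid
  · exact hsuf m hm m' hmm' hm'mid
  -- the pushes of `[hi, mid)` sit on top of the stack at `hi` and absorb the pops of `[mid, len)`
  obtain ⟨Y, hY⟩ := hsuf hi (by omega) mid hhi le_rfl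
  have hYlen : Y.length = mid - hi := by
    have := hf.length_stack_of_call (by omega) hc mid hhi le_rfl
    rw [← hY, List.length_append] at this
    omega
  rw [hf.stack_eq_drop_of_ret hlen hr m' (by omega) hm', ← hY,
    List.drop_append_of_le_length (by omega)]
  exact (hsuf m hm hi hmhi (by omega)).trans (List.suffix_append _ _)

theorem IsRun.blockPumpable {x : A} (hf : IsRun h M w f) (hhi : hi ≤ w.length)
    (hx : ∀ k y, lo ≤ k → k < hi → w[k]? = some y → y = x)
    (hret : ∀ s, h.kind x = .ret s → (f lo).2 s = [])
    (hcall : ∀ s, h.kind x = .call s → StackPersists f s lo hi len) :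
    BlockPumpable f lo hi len := by
  intro s
  by_cases hc : h.kind x = .call s
  · exact .inr (hcall s hc)
  have hnc : ∀ k y, lo ≤ k → k < hi → w[k]? = some y → h.kind y ≠ .call s :=
    fun k y h1 h2 hy => hx k y h1 h2 hy ▸ hc
  by_cases hr : h.kind x = .ret s
  · exact .inl fun m h1 h2 => by
      rw [hf.stack_eq_nil hhi hnc (hret s hr) m h1 h2, hret s hr]
  · exact .inl (hf.stack_eq_of_untouched hhi hnc fun k y h1 h2 hy => hx k y h1 h2 hy ▸ hr)

def rebase (B B' S : List Γ) : List Γ :=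
  S.take (S.length - B.length) ++ B'

theorem rebase_append (B B' Y : List Γ) : rebase B B' (Y ++ B) = Y ++ B' := by
  simp [rebase]

theorem rebase_nil (S : List Γ) : rebase [] [] S = S := by
  simp [rebase]

theorem vStep_rebase {a : A} {c c' : Q × (Fin K → List Γ)} {B B' : Fin K → List Γ}
    (hs : vStep h M a c c') (hc : ∀ s, B s <:+ c.2 s) (hc' : ∀ s, B s <:+ c'.2 s)
    (hB : ∀ s, B s = [] → B' s = []) :
    vStep h M a (c.1, fun s => rebase (B s) (B' s) (c.2 s))
      (c'.1, fun s => rebase (B s) (B' s) (c'.2 s)) := by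
  choose Y hY using hc
  choose Y' hY' using hc'
  rcases hs with ⟨s, hk, g, hp, he, hne⟩ | ⟨s, hk, hne, ⟨g, hp, he⟩ | ⟨hp, he, he'⟩⟩ |
    ⟨hk, hp, he⟩
  · refine .inl ⟨s, hk, g, hp, ?_, fun t ht => by simp only [hne t ht]⟩
    simp only [he, ← hY s, ← List.cons_append, rebase_append]
  · refine .inr (.inl ⟨s, hk, fun t ht => by simp only [hne t ht], .inl ⟨g, hp, ?_⟩⟩)
    simp only [he, ← hY' s, ← List.cons_append, rebase_append]
  · have hBs : B s = [] := List.append_eq_nil_iff.mp ((hY s).trans he) |>.2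
    refine .inr (.inl ⟨s, hk, fun t ht => by simp only [hne t ht], .inr ⟨hp, ?_, ?_⟩⟩) <;>
      simp [he, he', hBs, hB s hBs, rebase_nil]
  · exact .inr (.inr ⟨hk, hp, by simp only [he]⟩)

theorem IsRun.rebase {B B' : Fin K → List Γ} (hf : IsRun h M w f)
    (hB : ∀ m, m ≤ w.length → ∀ s, B s <:+ (f m).2 s) (hB' : ∀ s, B s = [] → B' s = []) :
    IsRun h M w fun m => ((f m).1, fun s => rebase (B s) (B' s) ((f m).2 s)) := by
  intro i a hi
  have hlt : i < w.length := (List.getElem?_eq_some_iff.mp hi).1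
  exact vStep_rebase (hf i a hi) (hB i hlt.le) (hB (i + 1) hlt) hB'

theorem IsRun.take (hf : IsRun h M w f) (p : ℕ) : IsRun h M (w.take p) f := by
  intro i a hi
  rw [List.getElem?_take] at hi
  split_ifs at hi
  exact hf i a hi

theorem IsRun.drop (hf : IsRun h M w f) (q : ℕ) : IsRun h M (w.drop q) fun m => f (q + m) := by
  intro i a hi
  rw [List.getElem?_drop] at hi
  exact hf _ _ hi

theorem IsRun.append {u v : List A} {g : ℕ → Q × (Fin K → List Γ)} (hu : IsRun h M u f)
    (hv : IsRun h M v g) (hfg : f u.length = g 0) :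
    IsRun h M (u ++ v) fun m => if m ≤ u.length then f m else g (m - u.length) := by
  intro i a hi
  rw [List.getElem?_append] at hi
  dsimp only
  by_cases hiu : i < u.length
  · rw [if_pos hiu] at hi
    rw [if_pos hiu.le, if_pos (show i + 1 ≤ u.length from hiu)]
    exact hu i a hi
  · rw [if_neg hiu] at hi
    have hgi : (if i ≤ u.length then f i else g (i - u.length)) = g (i - u.length) := by
      split_ifs with hi'
      · rw [show i = u.length by omega, hfg, Nat.sub_self]
      · rfl
    rw [hgi, if_neg (by omega), show i + 1 - u.length = i - u.length + 1 by omega]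
    exact hv _ a hi

theorem vAccepts_take_append_drop {p q : ℕ} (h0 : (f 0).1 ∈ M.qI) (hnil : ∀ s, (f 0).2 s = [])
    (hf : IsRun h M w f) (hF : (f w.length).1 ∈ M.qF) (hpq : p ≤ q) (hq : q ≤ w.length)
    (hstate : (f p).1 = (f q).1) (B B' : Fin K → List Γ)
    (hB : ∀ m, q ≤ m → m ≤ w.length → ∀ s, B s <:+ (f m).2 s) (hB' : ∀ s, B s = [] → B' s = [])
    (hrebase : ∀ s, rebase (B s) (B' s) ((f q).2 s) = (f p).2 s) :
    vAccepts h M (w.take p ++ w.drop q) := by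
  -- after the cut, run on from `f q` with the bottom `B s` of each stack `s` replaced by `B' s`
  have hg := (hf.drop q).rebase (B := B) (B' := B')
    (fun m hm => hB (q + m) (by omega) (by simp only [List.length_drop] at hm; omega)) hB'
  have hp : (w.take p).length = p := List.length_take_of_le (by omega)
  have hjoin := (hf.take p).append hg (by
    rw [hp]
    exact Prod.ext hstate (funext fun s => (hrebase s).symm))
  refine ⟨_, ?_, ?_, hjoin, ?_⟩
  · simpa using h0
  · simpa using hnil
  · simp only [List.length_append, hp, List.length_drop]
    split_ifs with hend
    · rwa [show p + (w.length - q) = p by omega, hstate, show q = w.length by omega]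
    · dsimp only
      rwa [show q + (p + (w.length - q) - p) = w.length by omega]

theorem exists_vAccepts_take_append_drop [Fintype Q] (h0 : (f 0).1 ∈ M.qI)
    (hnil : ∀ s, (f 0).2 s = []) (hf : IsRun h M w f)
    (hF : (f w.length).1 ∈ M.qF) (hhi : hi ≤ w.length) (hcard : lo + Fintype.card Q ≤ hi)
    (hpump : BlockPumpable f lo hi w.length) :
    ∃ p q, lo ≤ p ∧ p < q ∧ q ≤ hi ∧ vAccepts h M (w.take p ++ w.drop q) := by
  classical
  obtain ⟨p, q, hp, hpq, hq, hstate⟩ := exists_lt_map_eq_of_add_card_le (fun m => (f m).1) hcard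
  refine ⟨p, q, hp, hpq, hq, vAccepts_take_append_drop h0 hnil hf hF hpq.le (by omega) hstate
    (fun s => if StackPersists f s lo hi w.length then (f q).2 s else [])
    (fun s => if StackPersists f s lo hi w.length then (f p).2 s else []) ?_ ?_ ?_⟩
  · intro m hqm hm s
    split_ifs with hs
    · exact hs q m (by omega) hq hqm hm
    · exact List.nil_suffix
  · intro s
    split_ifs with hs
    · exact fun hnil => List.suffix_nil.mp (hnil ▸ hs p q hp (by omega) hpq.le (by omega))
    · exact fun _ => rfl
  · intro s
    split_ifs with hs
    · simpa using rebase_append ((f q).2 s) ((f p).2 s) []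
    · have hconst := (hpump s).resolve_right hs
      rw [rebase_nil, hconst q (by omega) hq, hconst p hp (by omega)]

end Runs

theorem eq_take_append_replicate_append_drop {α : Type*} {w : List α} {x : α} {p q : ℕ}
    (hpq : p ≤ q) (hq : q ≤ w.length) (hx : ∀ k, p ≤ k → k < q → w[k]? = some x) :
    w = w.take p ++ List.replicate (q - p) x ++ w.drop q := by
  have hmid : (w.take q).drop p = List.replicate (q - p) x := by
    refine List.eq_replicate_iff.mpr
      ⟨by simp only [List.length_drop, List.length_take]; omega, fun b hb => ?_⟩
    obtain ⟨i, hi⟩ := List.mem_iff_getElem?.mp hb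
    rw [List.getElem?_drop, List.getElem?_take] at hi
    split_ifs at hi with hlt
    · exact Option.some.inj (hi.symm.trans (hx _ (by omega) hlt))
  calc w = w.take q ++ w.drop q := (List.take_append_drop q w).symm
    _ = _ := by rw [← List.take_append_drop p (w.take q), List.take_take, min_eq_left hpq, hmid]

def abcWord (n : ℕ) : List L3abc :=
  List.replicate n L3abc.a ++ List.replicate n L3abc.b ++ List.replicate n L3abc.c

def blockStart (n : ℕ) : L3abc → ℕ
  | .a => 0
  | .b => n
  | .c => 2 * n

theorem length_abcWord (n : ℕ) : (abcWord n).length = 3 * n := by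
  simp only [abcWord, List.length_append, List.length_replicate]
  omega

theorem blockStart_add_le (n : ℕ) (x : L3abc) : blockStart n x + n ≤ 3 * n := by
  cases x <;> simp only [blockStart] <;> omega

theorem getElem?_abcWord_eq_some_iff {n k : ℕ} {x : L3abc} :
    (abcWord n)[k]? = some x ↔ blockStart n x ≤ k ∧ k < blockStart n x + n := by
  simp only [abcWord, List.getElem?_append, List.getElem?_replicate, List.length_append,
    List.length_replicate]
  cases x <;> split_ifs <;> simp [blockStart] <;> omega

theorem forall_abcWord_letters {P : L3abc → Prop} {n lo hi : ℕ} (ha : lo < n → P .a)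
    (hb : lo < 2 * n → n < hi → P .b) (hc : 2 * n < hi → P .c) :
    ∀ k x, lo ≤ k → k < hi → (abcWord n)[k]? = some x → P x := by
  intro k x h1 h2 hx
  rw [getElem?_abcWord_eq_some_iff] at hx
  cases x <;> simp only [blockStart] at hx
  exacts [ha (by omega), hb (by omega) (by omega), hc (by omega)]

theorem count_abcWord (n : ℕ) (x : L3abc) : (abcWord n).count x = n := by
  cases x <;> simp [abcWord, List.count_replicate]

theorem count_take_append_drop_abcWord {n p q : ℕ} {x : L3abc} (hp : blockStart n x ≤ p)
    (hpq : p ≤ q) (hq : q ≤ blockStart n x + n) (y : L3abc) :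
    ((abcWord n).take p ++ (abcWord n).drop q).count y +
      (List.replicate (q - p) x).count y = n := by
  have hsplit := eq_take_append_replicate_append_drop (w := abcWord n) hpq
    (by have := blockStart_add_le n x; rw [length_abcWord]; omega)
    (fun k h1 h2 => (getElem?_abcWord_eq_some_iff (x := x)).mpr ⟨by omega, by omega⟩)
  have := congrArg (List.count y) hsplit
  rw [count_abcWord, List.count_append, List.count_append] at this
  rw [List.count_append]
  omega

theorem take_append_drop_abcWord_ne {n p q : ℕ} {x : L3abc} (hp : blockStart n x ≤ p)
    (hpq : p < q) (hq : q ≤ blockStart n x + n) :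
    (abcWord n).take p ++ (abcWord n).drop q ≠ [] ∧
      ∀ m, (abcWord n).take p ++ (abcWord n).drop q ≠ abcWord m := by
  obtain ⟨y, hyx⟩ : ∃ y, x ≠ y := by
    cases x
    exacts [⟨.b, by decide⟩, ⟨.a, by decide⟩, ⟨.a, by decide⟩]
  have hx := count_take_append_drop_abcWord hp hpq.le hq x
  have hy := count_take_append_drop_abcWord hp hpq.le hq y
  simp only [List.count_replicate, beq_self_eq_true, if_true, beq_iff_eq, hyx, if_false] at hx hy
  refine ⟨fun he => ?_, fun m he => ?_⟩ <;> rw [he] at hx hy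
  · simp only [List.count_nil, zero_add] at hx hy
    omega
  · rw [count_abcWord] at hx hy
    omega

section CaseAnalysis

variable {K : ℕ} {Q Γ : Type} {h : CRAlphabet K L3abc} {M : MVPA K L3abc Q Γ}
variable {f : ℕ → Q × (Fin K → List Γ)} {n : ℕ}

theorem IsRun.blockPumpable_abcWord (hf : IsRun h M (abcWord n) f) (x : L3abc)
    (hret : ∀ s, h.kind x = .ret s → (f (blockStart n x)).2 s = [])
    (hcall : ∀ s, h.kind x = .call s →
      StackPersists f s (blockStart n x) (blockStart n x + n) (3 * n)) :
    BlockPumpable f (blockStart n x) (blockStart n x + n) (3 * n) :=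
  hf.blockPumpable (by rw [length_abcWord]; exact blockStart_add_le n x)
    (fun _ _ h1 h2 hy =>
      Option.some.inj (hy.symm.trans (getElem?_abcWord_eq_some_iff.mpr ⟨h1, h2⟩)))
    hret hcall

theorem IsRun.blockPumpable_abcWord_c (hf : IsRun h M (abcWord n) f)
    (hret : ∀ s, h.kind .c = .ret s → (f (2 * n)).2 s = []) :
    BlockPumpable f (blockStart n .c) (blockStart n .c + n) (3 * n) :=
  hf.blockPumpable_abcWord .c hret fun _ hs =>
    hf.stackPersists_of_no_ret (lo := 2 * n) (length_abcWord n).ge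
      (forall_abcWord_letters (fun _ => by omega) (fun _ _ => by omega) fun _ => by simp [hs])

theorem IsRun.exists_blockPumpable_abcWord_of_call_ret {s₁ t : Fin K}
    (hf : IsRun h M (abcWord n) f) (hnil : ∀ s, (f 0).2 s = [])
    (hka : h.kind .a = .call s₁) (hkb : h.kind .b = .ret t) :
    ∃ x, BlockPumpable f (blockStart n x) (blockStart n x + n) (3 * n) := by
  have hlen := length_abcWord n
  by_cases ht : t = s₁
  · subst ht
    -- all stacks are empty once `b` has popped what `a` pushed
    refine ⟨.c, hf.blockPumpable_abcWord_c fun s _ => ?_⟩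
    by_cases hs : s = t
    · subst hs
      have hpush := hf.length_stack_of_call (s := s) (lo := 0) (hi := n) (by omega)
        (forall_abcWord_letters (fun _ => hka) (fun _ _ => by omega) fun _ => by omega)
        n (by omega) le_rfl
      rw [hnil, List.length_nil] at hpush
      rw [hf.stack_eq_drop_of_ret (lo := n) (hi := 2 * n) (by omega)
        (forall_abcWord_letters (fun _ => by omega) (fun _ _ => hkb) fun _ => by omega)
        (2 * n) (by omega) le_rfl, List.drop_eq_nil_iff]
      omega
    · exact hf.stack_eq_nil (lo := 0) (by omega)
        (forall_abcWord_letters (fun _ => by simp [hka, Ne.symm hs]) (fun _ _ => by simp [hkb])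
          fun _ => by omega) (hnil s) (2 * n) (by omega) le_rfl
  · refine ⟨.b, hf.blockPumpable_abcWord .b (fun s hs => ?_) (by simp [hkb])⟩
    rw [hkb, CRKind.ret.injEq] at hs
    subst hs
    exact hf.stack_eq_nil (lo := 0) (by omega)
      (forall_abcWord_letters (fun _ => by simp [hka, Ne.symm ht]) (fun _ _ => by omega)
        fun _ => by omega) (hnil _) n (by omega) le_rfl

theorem IsRun.exists_blockPumpable_abcWord_of_call_call {s₁ t : Fin K}
    (hf : IsRun h M (abcWord n) f) (hnil : ∀ s, (f 0).2 s = [])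
    (hka : h.kind .a = .call s₁) (hkb : h.kind .b = .call t) :
    ∃ x, BlockPumpable f (blockStart n x) (blockStart n x + n) (3 * n) := by
  have hlen := length_abcWord n
  by_cases hc : ∀ s, h.kind .c ≠ .ret s
  · exact ⟨.c, hf.blockPumpable_abcWord_c fun s hs => absurd hs (hc s)⟩
  obtain ⟨s₃, hkc⟩ := not_forall_not.mp hc
  by_cases h31 : s₃ = s₁
  · subst h31
    by_cases ht : t = s₃
    · subst ht
      refine ⟨.a, hf.blockPumpable_abcWord .a (by simp [hka]) fun s hs => ?_⟩
      rw [hka, CRKind.call.injEq] at hs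
      subst hs
      exact hf.stackPersists_of_call_ret (lo := 0) (hi := 0 + n) (mid := 2 * n) hlen.ge
        (forall_abcWord_letters (fun _ => by simp [hka]) (fun _ _ => by omega) fun _ => by omega)
        (forall_abcWord_letters (fun _ => by omega) (fun _ _ => hkb) fun _ => by omega)
        (forall_abcWord_letters (fun _ => by omega) (fun _ _ => by omega) fun _ => hkc)
        (by omega) (by omega) (by omega)
    · refine ⟨.b, hf.blockPumpable_abcWord .b (by simp [hkb]) fun s hs => ?_⟩
      rw [hkb, CRKind.call.injEq] at hs
      subst hs
      exact hf.stackPersists_of_no_ret (lo := n) hlen.ge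
        (forall_abcWord_letters (fun _ => by omega) (fun _ _ => by simp [hkb])
          fun _ => by simp [hkc, Ne.symm ht])
  · by_cases h3t : s₃ = t
    · subst h3t
      refine ⟨.a, hf.blockPumpable_abcWord .a (by simp [hka]) fun s hs => ?_⟩
      rw [hka, CRKind.call.injEq] at hs
      subst hs
      exact hf.stackPersists_of_no_ret (lo := 0) hlen.ge
        (forall_abcWord_letters (fun _ => by simp [hka]) (fun _ _ => by simp [hkb])
          fun _ => by simp [hkc, h31])
    · refine ⟨.c, hf.blockPumpable_abcWord_c fun s hs => ?_⟩
      rw [hkc, CRKind.ret.injEq] at hs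
      subst hs
      exact hf.stack_eq_nil (lo := 0) (by omega)
        (forall_abcWord_letters (fun _ => by simp [hka, Ne.symm h31])
          (fun _ _ => by simp [hkb, Ne.symm h3t]) fun _ => by omega)
        (hnil _) (2 * n) (by omega) le_rfl

theorem IsRun.exists_blockPumpable_abcWord (hf : IsRun h M (abcWord n) f)
    (hnil : ∀ s, (f 0).2 s = []) :
    ∃ x, BlockPumpable f (blockStart n x) (blockStart n x + n) (3 * n) := by
  rcases hka : h.kind .a with s₁ | s₁ | _
  · rcases hkb : h.kind .b with t | t | _
    · exact hf.exists_blockPumpable_abcWord_of_call_call hnil hka hkb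
    · exact hf.exists_blockPumpable_abcWord_of_call_ret hnil hka hkb
    · exact ⟨.b, hf.blockPumpable_abcWord .b (by simp [hkb]) (by simp [hkb])⟩
  all_goals exact ⟨.a, hf.blockPumpable_abcWord .a (fun s _ => hnil s) (by simp [hka])⟩

end CaseAnalysis

theorem stmt11_general (K : ℕ) (h : CRAlphabet K L3abc) (Q Γ : Type)
    [Fintype Q] (M : MVPA K L3abc Q Γ) :
    vLang h M ≠ {w | ∃ n, 1 ≤ n ∧
      w = List.replicate n L3abc.a ++ List.replicate n L3abc.b ++
        List.replicate n L3abc.c} := by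
  intro heq
  set n := Fintype.card Q + 1
  have hw : abcWord n ∈ vLang h M := heq ▸ ⟨n, by omega, rfl⟩
  obtain ⟨-, f, h0, hnil, hf, hF⟩ := hw
  obtain ⟨x, hx⟩ := IsRun.exists_blockPumpable_abcWord hf hnil
  rw [← length_abcWord] at hx
  obtain ⟨p, q, hp, hpq, hq, hacc⟩ := exists_vAccepts_take_append_drop h0 hnil hf hF
    (by rw [length_abcWord]; exact blockStart_add_le n x) (by omega) hx
  obtain ⟨hne, hne'⟩ := take_append_drop_abcWord_ne hp hpq hq
  have hmem : (abcWord n).take p ++ (abcWord n).drop q ∈ vLang h M := ⟨hne, hacc⟩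
  rw [heq] at hmem
  obtain ⟨m, -, hm⟩ := hmem
  exact hne' m hm

/-- no multi-stack visibly pushdown automaton recognizes
`{aⁿbⁿcⁿ | n ≥ 1}`, regardless of the choice of the `K`-stack call-return
alphabet partitioning `{a,b,c}`. -/
theorem stmt11 (K : ℕ) (h : CRAlphabet K L3abc) (Q Γ : Type)
    [Fintype Q] [Fintype Γ] (M : MVPA K L3abc Q Γ) :
    vLang h M ≠ {w | ∃ n, 1 ≤ n ∧
      w = List.replicate n L3abc.a ++ List.replicate n L3abc.b ++
        List.replicate n L3abc.c} :=
  stmt11_general K h Q Γ M
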